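/- arXiv:2505.00241 — 5 statements merged into one kernel-verified Lean document; each statement's English description precedes it below -/
import Mathlib

section
/- Let ζ ∈ k be a primitive 8th root of unity and set i = ζ² (so i² = −1). Let b ∈ k with b ∉ {2, −2}, and suppose α, β, γ, δ, λ ∈ k with αδ−βγ ≠ 0 and λ ≠ 0 satisfy λ²·f_b(X) = Σ_{j=0}^{9} cⱼ·(αX+β)ʲ·(γX+δ)^{10−j} in k[X], where cⱼ is the coefficient of Xʲ in f_0. Then the unordered pair of points {[β:δ], [α:γ]} of the projective line ℙ¹(k) equals one of the five pairs: {[0:1], [1:0]}, {[1:1], [−1:1]}, {[i:1], [−i:1]}, {[ζ⁻¹:1], [−ζ⁻¹:1]}, {[ζ:1], [−ζ:1]}. -/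
open Polynomial

/-- The polynomial `f_a = X (X⁴ − 1)(X⁴ + a X² + 1)` over a field `k`. -/
noncomputable def f {k : Type*} [Field k] (a : k) : k[X] :=
  X * (X ^ 4 - 1) * (X ^ 4 + C a * X ^ 2 + 1)

/-- The point `[x : y]` of the projective line over `k` (for `(x, y) ≠ (0, 0)`). -/
noncomputable def pt {k : Type*} [Field k] (x y : k) (h : (x, y) ≠ 0) :
    Projectivization k (k × k) :=
  Projectivization.mk k (x, y) h

lemma pt_eq2 {k : Type*} [Field k] (x y x' y' c : k) (hc : c ≠ 0)
    (hx : x = c * x') (hy : y = c * y')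
    (h : ((x, y) : k × k) ≠ 0) (h' : ((x', y') : k × k) ≠ 0) :
    pt x y h = pt x' y' h' := by
  subst hx; subst hy
  unfold pt
  rw [Projectivization.mk_eq_mk_iff]
  exact ⟨Units.mk0 c hc, by simp [Units.smul_def, Prod.smul_def]⟩

lemma expand_key {k : Type*} [Field k] (a b c d : k) :
    (C a * X + C b : k[X])^9 * (C c * X + C d) - (C a * X + C b) * (C c * X + C d)^9
    = C (b^9*d - b*d^9)
    + C (9*a*b^8*d + b^9*c - 9*b*c*d^8 - a*d^9) * X
    + C (36*a^2*b^7*d + 9*a*b^8*c - 36*b*c^2*d^7 - 9*a*c*d^8) * X^2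
    + C (84*a^3*b^6*d + 36*a^2*b^7*c - 84*b*c^3*d^6 - 36*a*c^2*d^7) * X^3
    + C (126*a^4*b^5*d + 84*a^3*b^6*c - 126*b*c^4*d^5 - 84*a*c^3*d^6) * X^4
    + C (126*a^5*b^4*d + 126*a^4*b^5*c - 126*b*c^5*d^4 - 126*a*c^4*d^5) * X^5
    + C (84*a^6*b^3*d + 126*a^5*b^4*c - 84*b*c^6*d^3 - 126*a*c^5*d^4) * X^6
    + C (36*a^7*b^2*d + 84*a^6*b^3*c - 36*b*c^7*d^2 - 84*a*c^6*d^3) * X^7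
    + C (9*a^8*b*d + 36*a^7*b^2*c - 9*b*c^8*d - 36*a*c^7*d^2) * X^8
    + C (a^9*d + 9*a^8*b*c - b*c^9 - 9*a*c^8*d) * X^9
    + C (a^9*c - a*c^9) * X^10 := by
  simp only [map_mul, map_add, map_sub, map_pow, map_ofNat]
  ring

theorem stmt_5 (p : ℕ) (hp : p.Prime) (hp7 : 7 ≤ p)
    (k : Type*) [Field k] [IsAlgClosed k] [CharP k p]
    (ζ : k) (hζ : IsPrimitiveRoot ζ 8) (i : k) (hi : i = ζ ^ 2)
    (b : k) (hb : b ∉ ({2, -2} : Set k))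
    (α β γ δ lam : k) (hdet : α * δ - β * γ ≠ 0) (hlam : lam ≠ 0)
    (hiso : C (lam ^ 2) * f b =
      ∑ j ∈ Finset.range 10,
        C ((f (0 : k)).coeff j) * (C α * X + C β) ^ j * (C γ * X + C δ) ^ (10 - j)) :
    ∃ (h₁ : ((β, δ) : k × k) ≠ 0) (h₂ : ((α, γ) : k × k) ≠ 0),
      ({pt β δ h₁, pt α γ h₂} : Set (Projectivization k (k × k))) =
          {pt 0 1 (by simp), pt 1 0 (by simp)} ∨
      ({pt β δ h₁, pt α γ h₂} : Set (Projectivization k (k × k))) =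
          {pt 1 1 (by simp), pt (-1) 1 (by simp)} ∨
      ({pt β δ h₁, pt α γ h₂} : Set (Projectivization k (k × k))) =
          {pt i 1 (by simp), pt (-i) 1 (by simp)} ∨
      ({pt β δ h₁, pt α γ h₂} : Set (Projectivization k (k × k))) =
          {pt ζ⁻¹ 1 (by simp), pt (-ζ⁻¹) 1 (by simp)} ∨
      ({pt β δ h₁, pt α γ h₂} : Set (Projectivization k (k × k))) =
          {pt ζ 1 (by simp), pt (-ζ) 1 (by simp)} := by
  -- Step 1: rewrite the isomorphism identity into explicit coefficient form
  have hf0 : (f (0:k)) = X^9 - X := by unfold f; simp; ring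
  rw [hf0] at hiso
  rw [show (∑ j ∈ Finset.range 10,
        C ((X^9 - X : k[X]).coeff j) * (C α * X + C β) ^ j * (C γ * X + C δ) ^ (10 - j))
      = (C α * X + C β)^9 * (C γ * X + C δ) - (C α * X + C β) * (C γ * X + C δ)^9 from by
    simp [Finset.sum_range_succ, coeff_X_pow, coeff_X]; ring] at hiso
  rw [show f b = X^9 + C b * X^7 - C b * X^3 - X from by unfold f; ring] at hiso
  rw [expand_key α β γ δ] at hiso
  have h0 := congrArg (fun P => coeff P 0) hiso
  have h2 := congrArg (fun P => coeff P 2) hiso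
  have h8 := congrArg (fun P => coeff P 8) hiso
  have h10 := congrArg (fun P => coeff P 10) hiso
  simp only [coeff_add, coeff_sub, coeff_C_mul, coeff_X_pow, coeff_X, coeff_C] at h0 h2 h8 h10
  norm_num at h0 h2 h8 h10
  -- Step 2: basic nonvanishing of small numbers
  have h2k : (2:k) ≠ 0 := by
    have : ((2:ℕ):k) ≠ 0 := by
      rw [Ne, CharP.cast_eq_zero_iff k p]
      intro hdvd
      have := Nat.le_of_dvd (by norm_num) hdvd
      omega
    simpa using this
  have h3k : (3:k) ≠ 0 := by
    have : ((3:ℕ):k) ≠ 0 := by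
      rw [Ne, CharP.cast_eq_zero_iff k p]
      intro hdvd
      have := Nat.le_of_dvd (by norm_num) hdvd
      omega
    simpa using this
  have h9k : (9:k) ≠ 0 := by
    have h := mul_ne_zero h3k h3k
    norm_num at h
    exact h
  have h36k : (36:k) ≠ 0 := by
    have h := mul_ne_zero (mul_ne_zero h2k h2k) (mul_ne_zero h3k h3k)
    norm_num at h
    exact h
  have h₁ : ((β, δ) : k × k) ≠ 0 := by
    intro h
    rw [Prod.mk_eq_zero] at h
    apply hdet; rw [h.1, h.2]; ring
  have h₂ : ((α, γ) : k × k) ≠ 0 := by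
    intro h
    rw [Prod.mk_eq_zero] at h
    apply hdet; rw [h.1, h.2]; ring
  refine ⟨h₁, h₂, ?_⟩
  by_cases hβ0 : β = 0
  · -- case [β:δ] = [0:1]; conclude γ = 0
    have hα : α ≠ 0 := by intro h; apply hdet; rw [h, hβ0]; ring
    have hδ : δ ≠ 0 := by intro h; apply hdet; rw [h, hβ0]; ring
    have hγ0 : γ = 0 := by
      by_contra hγ
      rw [hβ0] at h8
      have key : (36:k)*α*γ^7*δ^2 = 0 := by linear_combination h8
      exact (mul_ne_zero (mul_ne_zero (mul_ne_zero h36k hα) (pow_ne_zero 7 hγ))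
        (pow_ne_zero 2 hδ)) key
    left
    rw [pt_eq2 β δ 0 1 δ hδ (by rw [hβ0, mul_zero]) (mul_one δ).symm h₁ (by simp),
        pt_eq2 α γ 1 0 α hα (mul_one α).symm (by rw [hγ0, mul_zero]) h₂ (by simp)]
  · by_cases hδ0 : δ = 0
    · -- case [β:δ] = [1:0]; conclude α = 0
      have hγ : γ ≠ 0 := by intro h; apply hdet; rw [hδ0, h]; ring
      have hα0 : α = 0 := by
        by_contra hα
        rw [hδ0] at h2
        have key : (9:k)*α*β^8*γ = 0 := by linear_combination -h2
        exact (mul_ne_zero (mul_ne_zero (mul_ne_zero h9k hα) (pow_ne_zero 8 hβ0)) hγ) key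
      left
      rw [pt_eq2 β δ 1 0 β hβ0 (mul_one β).symm (by rw [hδ0, mul_zero]) h₁ (by simp),
          pt_eq2 α γ 0 1 γ hγ (by rw [hα0, mul_zero]) (mul_one γ).symm h₂ (by simp),
          Set.pair_comm]
    · -- main case : β ≠ 0 and δ ≠ 0
      have hβ : β ≠ 0 := hβ0
      have hδ : δ ≠ 0 := hδ0
      have hβδ8 : β^8 = δ^8 := by
        have key : β*δ*(β^8 - δ^8) = 0 := by linear_combination -h0
        rcases mul_eq_zero.mp key with h | h
        · exact absurd h (mul_ne_zero hβ hδ)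
        · exact sub_eq_zero.mp h
      have hγ : γ ≠ 0 := by
        intro hγ0
        have hα : α ≠ 0 := by intro h; apply hdet; rw [h, hγ0]; ring
        rw [hγ0] at h8
        have key : (9:k)*α^8*β*δ = 0 := by linear_combination -h8
        exact (mul_ne_zero (mul_ne_zero (mul_ne_zero h9k (pow_ne_zero 8 hα)) hβ) hδ) key
      have hα : α ≠ 0 := by
        intro hα0
        rw [hα0] at h2
        have key : (36:k)*β*γ^2*δ^7 = 0 := by linear_combination h2
        exact (mul_ne_zero (mul_ne_zero (mul_ne_zero h36k hβ) (pow_ne_zero 2 hγ))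
          (pow_ne_zero 7 hδ)) key
      have h22 : α^2*β^6 = γ^2*δ^6 := by
        have key : (36:k)*(β*δ)*(α^2*β^6 - γ^2*δ^6) = 0 := by
          linear_combination -h2 - 9*α*γ*hβδ8
        rcases mul_eq_zero.mp key with h | h
        · exact absurd h (mul_ne_zero h36k (mul_ne_zero hβ hδ))
        · exact sub_eq_zero.mp h
      have hsum : α*δ + β*γ = 0 := by
        have key : (α*δ - β*γ)*((α*δ + β*γ)*β^6) = 0 := by
          linear_combination δ^2*h22 - γ^2*hβδ8
        rcases mul_eq_zero.mp key with h | h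
        · exact absurd h hdet
        · rcases mul_eq_zero.mp h with h' | h'
          · exact h'
          · exact absurd h' (pow_ne_zero 6 hβ)
      -- roots of unity bookkeeping
      have hζ8 : ζ^8 = 1 := hζ.pow_eq_one
      have hζ0 : ζ ≠ 0 := by intro h; rw [h] at hζ8; norm_num at hζ8
      have hζ4 : ζ^4 = -1 := by
        have hne : ζ^4 ≠ 1 := hζ.pow_ne_one_of_pos_of_lt (by norm_num) (by norm_num)
        have hfac : (ζ^4 - 1)*(ζ^4 + 1) = 0 := by linear_combination hζ8
        rcases mul_eq_zero.mp hfac with h | h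
        · exact absurd (by linear_combination h) hne
        · linear_combination h
      have hv8 : (β/δ)^8 = 1 := by
        rw [div_pow, hβδ8, div_self (pow_ne_zero 8 hδ)]
      obtain ⟨k0, hk0lt, hk0⟩ := hζ.eq_pow_of_pow_eq_one hv8
      have hv : β = δ * (β/δ) := by field_simp
      have hav : α = γ * (-(β/δ)) := by
        field_simp
        linear_combination hsum
      interval_cases k0
      · -- v = 1
        have hw : β/δ = 1 := by simpa using hk0.symm
        right; left
        rw [pt_eq2 β δ 1 1 δ hδ (by rw [hv, hw]) (mul_one δ).symm h₁ (by simp),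
            pt_eq2 α γ (-1) 1 γ hγ (by rw [hav, hw]) (mul_one γ).symm h₂ (by simp)]
      · -- v = ζ
        have hw : β/δ = ζ := by simpa using hk0.symm
        right; right; right; right
        rw [pt_eq2 β δ ζ 1 δ hδ (by rw [hv, hw]) (mul_one δ).symm h₁ (by simp),
            pt_eq2 α γ (-ζ) 1 γ hγ (by rw [hav, hw]) (mul_one γ).symm h₂ (by simp)]
      · -- v = i
        have hw : β/δ = i := by rw [hi]; exact hk0.symm
        right; right; left
        rw [pt_eq2 β δ i 1 δ hδ (by rw [hv, hw]) (mul_one δ).symm h₁ (by simp),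
            pt_eq2 α γ (-i) 1 γ hγ (by rw [hav, hw]) (mul_one γ).symm h₂ (by simp)]
      · -- v = ζ³ = -ζ⁻¹
        have hw : β/δ = -ζ⁻¹ := by
          rw [← hk0]
          field_simp
          linear_combination hζ4
        right; right; right; left
        rw [pt_eq2 β δ (-ζ⁻¹) 1 δ hδ (by rw [hv, hw]) (mul_one δ).symm h₁ (by simp),
            pt_eq2 α γ (ζ⁻¹) 1 γ hγ (by rw [hav, hw]; ring) (mul_one γ).symm h₂ (by simp),
            Set.pair_comm]
      · -- v = ζ⁴ = -1
        have hw : β/δ = -1 := by rw [← hk0]; exact hζ4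
        right; left
        rw [pt_eq2 β δ (-1) 1 δ hδ (by rw [hv, hw]) (mul_one δ).symm h₁ (by simp),
            pt_eq2 α γ 1 1 γ hγ (by rw [hav, hw]; ring) (mul_one γ).symm h₂ (by simp),
            Set.pair_comm]
      · -- v = ζ⁵ = -ζ
        have hw : β/δ = -ζ := by rw [← hk0]; linear_combination ζ*hζ4
        right; right; right; right
        rw [pt_eq2 β δ (-ζ) 1 δ hδ (by rw [hv, hw]) (mul_one δ).symm h₁ (by simp),
            pt_eq2 α γ ζ 1 γ hγ (by rw [hav, hw]; ring) (mul_one γ).symm h₂ (by simp),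
            Set.pair_comm]
      · -- v = ζ⁶ = -i
        have hw : β/δ = -i := by rw [← hk0, hi]; linear_combination ζ^2*hζ4
        right; right; left
        rw [pt_eq2 β δ (-i) 1 δ hδ (by rw [hv, hw]) (mul_one δ).symm h₁ (by simp),
            pt_eq2 α γ i 1 γ hγ (by rw [hav, hw]; ring) (mul_one γ).symm h₂ (by simp),
            Set.pair_comm]
      · -- v = ζ⁷ = ζ⁻¹
        have hw : β/δ = ζ⁻¹ := by
          rw [← hk0]
          field_simp
          linear_combination hζ8
        right; right; right; left
        rw [pt_eq2 β δ (ζ⁻¹) 1 δ hδ (by rw [hv, hw]) (mul_one δ).symm h₁ (by simp),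
            pt_eq2 α γ (-ζ⁻¹) 1 γ hγ (by rw [hav, hw]) (mul_one γ).symm h₂ (by simp)]
end

section
/- Let b ∈ k with b ∉ {2, −2}. There exist u, λ ∈ k with u ≠ 0 and λ ≠ 0 such that either λ²·f_b(X) = f_0(uX) in k[X], or λ²·f_b(X) = Σ_{j=0}^{9} cⱼ·uʲ·X^{10−j} in k[X] (where cⱼ is the coefficient of Xʲ in f_0, i.e. λ²·f_b(x) = x¹⁰·f_0(u/x)), if and only if b = 0. -/
open Polynomial

lemma f_eq {k : Type*} [Field k] (a : k) :
    f a = X ^ 9 + C a * X ^ 7 - C a * X ^ 3 - X := by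
  unfold f; ring

lemma f_coeff7 {k : Type*} [Field k] (a : k) : (f a).coeff 7 = a := by
  rw [f_eq]
  simp [coeff_add, coeff_sub, coeff_C_mul, coeff_X_pow, coeff_X]

lemma f_zero_eq {k : Type*} [Field k] : f (0 : k) = X ^ 9 - X := by
  rw [f_eq]; simp

theorem stmt_6 (p : ℕ) (hp : p.Prime) (hp7 : 7 ≤ p)
    (k : Type*) [Field k] [IsAlgClosed k] [CharP k p]
    (b : k) (hb : b ∉ ({2, -2} : Set k)) :
    (∃ u lam : k, u ≠ 0 ∧ lam ≠ 0 ∧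
      (C (lam ^ 2) * f b = (f (0 : k)).comp (C u * X) ∨
       C (lam ^ 2) * f b =
         ∑ j ∈ Finset.range 10, C ((f (0 : k)).coeff j * u ^ j) * X ^ (10 - j))) ↔ 
    b = 0 := by
  have hl2 : ∀ lam : k, lam ≠ 0 → (lam ^ 2 : k) ≠ 0 := fun lam h => pow_ne_zero 2 h
  constructor
  · rintro ⟨u, lam, hu, hl, h | h⟩
    · have hrhs : (f (0 : k)).comp (C u * X) = C (u ^ 9) * X ^ 9 - C u * X := by
        rw [f_zero_eq]
        simp only [sub_comp, pow_comp, X_comp, mul_pow, ← C_pow]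
      have h7 := congrArg (fun q : k[X] => q.coeff 7) h
      simp only [hrhs, coeff_C_mul, f_coeff7, coeff_sub, coeff_X_pow, coeff_X] at h7
      norm_num at h7
      rcases h7 with h7 | h7
      · exact absurd h7 hl
      · exact h7
    · rw [f_zero_eq] at h
      have h7 := congrArg (fun q : k[X] => q.coeff 7) h
      simp only [Finset.sum_range_succ, Finset.sum_range_zero, coeff_add, coeff_C_mul, f_coeff7,
        coeff_sub, coeff_X_pow, coeff_X, ← C_pow, coeff_C] at h7
      norm_num at h7
      rcases h7 with h7 | h7
      · exact absurd h7 hl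
      · exact h7
  · rintro rfl
    exact ⟨1, 1, one_ne_zero, one_ne_zero, Or.inl (by simp)⟩
end

section
/- Let ζ ∈ k be a primitive 8th root of unity and let b ∈ k with b ∉ {2, −2}. There exist u, λ ∈ k with u ≠ 0, λ ≠ 0 and ε ∈ {1, −1} such that λ²·f_b(X) = Σ_{j=0}^{9} cⱼ·(εζ⁻¹)ʲ·(X+u)ʲ·(X−u)^{10−j} in k[X] (where cⱼ is the coefficient of Xʲ in f_0, i.e. λ²·f_b(x) = (x−u)¹⁰·f_0(εζ⁻¹(x+u)/(x−u))), if and only if b = 6 or b = −6. -/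
open Polynomial

theorem stmt_9 (p : ℕ) (hp : p.Prime) (hp7 : 7 ≤ p)
    (k : Type*) [Field k] [IsAlgClosed k] [CharP k p]
    (ζ : k) (hζ : IsPrimitiveRoot ζ 8)
    (b : k) (hb : b ∉ ({2, -2} : Set k)) :
    (∃ u lam ε : k, u ≠ 0 ∧ lam ≠ 0 ∧ ε ∈ ({1, -1} : Set k) ∧
      C (lam ^ 2) * f b =
        ∑ j ∈ Finset.range 10,
          C ((f (0 : k)).coeff j * (ε * ζ⁻¹) ^ j) * (X + C u) ^ j * (X - C u) ^ (10 - j)) ↔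
    (b = 6 ∨ b = -6) := by
  -- basic numeric facts
  have key : ∀ n : ℕ, ¬ p ∣ n → ((n:ℕ):k) ≠ 0 := fun n hn => by
    rw [Ne, CharP.cast_eq_zero_iff k p]; exact hn
  have hP2 : p ≠ 2 := by omega
  have hP3 : p ≠ 3 := by omega
  have h96 : (96:k) ≠ 0 := by
    have := key 96 ?_
    · exact_mod_cast this
    · intro h
      rw [show (96:ℕ) = 2^5*3 by norm_num] at h
      rcases (Nat.Prime.dvd_mul hp).mp h with h' | h'
      · exact hP2 ((Nat.prime_dvd_prime_iff_eq hp Nat.prime_two).mp (hp.dvd_of_dvd_pow h'))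
      · exact hP3 ((Nat.prime_dvd_prime_iff_eq hp Nat.prime_three).mp h')
  have h16 : (16:k) ≠ 0 := by
    have := key 16 ?_
    · exact_mod_cast this
    · intro h
      rw [show (16:ℕ) = 2^4 by norm_num] at h
      exact hP2 ((Nat.prime_dvd_prime_iff_eq hp Nat.prime_two).mp (hp.dvd_of_dvd_pow h))
  -- facts about ζ
  have hz8 : ζ^8 = 1 := hζ.pow_eq_one
  have hz0 : ζ ≠ 0 := hζ.ne_zero (by norm_num)
  have hz4 : ζ^4 = -1 := by
    have hsq : (ζ^4 - 1) * (ζ^4 + 1) = 0 := by linear_combination hz8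
    rcases mul_eq_zero.mp hsq with h | h
    · exact absurd (by linear_combination h)
        (hζ.pow_ne_one_of_pos_of_lt (by norm_num) (by norm_num) : ζ^4 ≠ 1)
    · linear_combination h
  have hw0 : ζ⁻¹ ≠ 0 := inv_ne_zero hz0
  have hw8 : (ζ⁻¹)^8 = 1 := by rw [inv_pow, hz8, inv_one]
  have hfb : ∀ a : k, f a = X^9 + C a * X^7 - C a * X^3 - X := by
    intro a; unfold f; ring
  have hf0 : f (0:k) = X^9 - X := by unfold f; simp; ring
  -- simplification of the sum
  have hsum : ∀ u ε : k,
      ∑ j ∈ Finset.range 10,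
          C ((f (0 : k)).coeff j * (ε * ζ⁻¹) ^ j) * (X + C u) ^ j * (X - C u) ^ (10 - j)
      = C (-(ε * ζ⁻¹)) * (X + C u) * (X - C u)^9
        + C ((ε*ζ⁻¹)^9) * (X + C u)^9 * (X - C u) := by
    intro u ε
    simp [Finset.sum_range_succ, hf0, coeff_X]
  have hcw : (C ζ⁻¹ : k[X])^8 = 1 := by rw [← map_pow, hw8, map_one]
  constructor
  · -- forward direction
    rintro ⟨u, lam, ε, hu, hl, hε, heq⟩
    rw [hsum, hfb] at heq
    have hε2 : ε^2 = 1 := by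
      rcases hε with h | h <;> rw [h] <;> norm_num
    have hε0 : ε ≠ 0 := by
      rcases hε with h | h <;> rw [h] <;> norm_num
    have ht : ε * ζ⁻¹ ≠ 0 := mul_ne_zero hε0 hw0
    have h9 : (ε*ζ⁻¹)^9 = ε*ζ⁻¹ := by
      have h8 : (ε*ζ⁻¹)^8 = 1 := by
        rw [mul_pow, hw8, show ε^8 = (ε^2)^4 by ring, hε2]; norm_num
      calc (ε*ζ⁻¹)^9 = (ε*ζ⁻¹)^8 * (ε*ζ⁻¹) := by ring
        _ = ε*ζ⁻¹ := by rw [h8, one_mul]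
    rw [h9] at heq
    have heq2 : C (lam^2) * X^9 + C (lam^2*b) * X^7 - C (lam^2*b) * X^3 - C (lam^2) * X
        = C (16*(ε*ζ⁻¹)*u) * X^9 + C (96*(ε*ζ⁻¹)*u^3) * X^7
          - C (96*(ε*ζ⁻¹)*u^7) * X^3 - C (16*(ε*ζ⁻¹)*u^9) * X := by
      simp only [map_mul, map_pow, map_neg, map_ofNat] at heq ⊢
      linear_combination heq
    have e9 : lam^2 = 16*(ε*ζ⁻¹)*u := by
      have := congrArg (fun q => coeff q 9) heq2
      simp only [coeff_add, coeff_sub, coeff_C_mul, coeff_X_pow, coeff_X] at this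
      norm_num at this
      exact this
    have e7 : lam^2*b = 96*(ε*ζ⁻¹)*u^3 := by
      have := congrArg (fun q => coeff q 7) heq2
      simp only [coeff_add, coeff_sub, coeff_C_mul, coeff_X_pow, coeff_X] at this
      norm_num at this
      exact this
    have e3 : lam^2*b = 96*(ε*ζ⁻¹)*u^7 := by
      have := congrArg (fun q => coeff q 3) heq2
      simp only [coeff_add, coeff_sub, coeff_C_mul, coeff_X_pow, coeff_X] at this
      norm_num at this
      exact this
    have h0 : 96*(ε*ζ⁻¹)*u^3*(u^4 - 1) = 0 := by linear_combination e7 - e3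
    have hne : 96*(ε*ζ⁻¹)*u^3 ≠ 0 :=
      mul_ne_zero (mul_ne_zero h96 ht) (pow_ne_zero _ hu)
    have hu4 : u^4 = 1 := by
      have := (mul_eq_zero.mp h0).resolve_left hne
      linear_combination this
    have hb6 : b = 6*u^2 := by
      have hl2 : lam^2 ≠ 0 := pow_ne_zero _ hl
      apply mul_left_cancel₀ hl2
      linear_combination e7 - 6*u^2*e9
    have h0' : (u^2 - 1)*(u^2 + 1) = 0 := by linear_combination hu4
    rcases mul_eq_zero.mp h0' with h | h
    · left
      have : u^2 = 1 := by linear_combination h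
      rw [hb6, this]; norm_num
    · right
      have : u^2 = -1 := by linear_combination h
      rw [hb6, this]; norm_num
  · -- backward direction
    rintro (rfl | rfl)
    · obtain ⟨lam, hlam⟩ := IsAlgClosed.exists_pow_nat_eq (16*ζ⁻¹) (n := 2) (by norm_num)
      have hl : lam ≠ 0 := by
        intro h; rw [h] at hlam
        exact (mul_ne_zero h16 hw0) (by linear_combination -hlam)
      refine ⟨1, lam, 1, one_ne_zero, hl, Or.inl rfl, ?_⟩
      rw [hsum, hfb]
      have hcl : (C lam : k[X])^2 = 16 * C ζ⁻¹ := by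
        rw [← map_pow, hlam]; simp only [map_mul, map_pow, map_ofNat]
      simp only [one_mul, map_one, map_neg, map_pow, map_ofNat]
      linear_combination (X^9+6*X^7-6*X^3-X) * hcl + (C ζ⁻¹)*(X+1)^9*(X-1) * hcw
        - (C ζ⁻¹)*(2*X^10+16*X^9+54*X^8+96*X^7+84*X^6-84*X^4-96*X^3-54*X^2-16*X-2) * hcw
    · obtain ⟨lam, hlam⟩ := IsAlgClosed.exists_pow_nat_eq (16*ζ⁻¹*ζ^2) (n := 2) (by norm_num)
      have hl : lam ≠ 0 := by
        intro h; rw [h] at hlam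
        exact (mul_ne_zero (mul_ne_zero h16 hw0) (pow_ne_zero 2 hz0))
          (by linear_combination -hlam)
      refine ⟨ζ^2, lam, 1, pow_ne_zero 2 hz0, hl, Or.inl rfl, ?_⟩
      rw [hsum, hfb]
      have hcl : (C lam : k[X])^2 = 16 * C ζ⁻¹ * (C ζ)^2 := by
        rw [← map_pow, hlam]; simp only [map_mul, map_pow, map_ofNat]
      have hz4C : (C ζ : k[X])^4 = -1 := by
        rw [← map_pow, hz4]; simp
      simp only [one_mul, map_one, map_neg, map_pow, map_ofNat]
      linear_combination (X^9-6*X^7+6*X^3-X) * hcl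
        + (C ζ⁻¹)*(X+(C ζ)^2)^9*(X-(C ζ)^2) * hcw
        + 16*(C ζ⁻¹)*(C ζ)^2*(-6*X^7 + 6*X^3*((C ζ)^8-(C ζ)^4+1)
            + X*((C ζ)^4-1)*((C ζ)^8+1)) * hz4C
        - (C ζ⁻¹)*(2*X^10+16*X^9*(C ζ)^2+54*X^8*(C ζ)^4+96*X^7*(C ζ)^6+84*X^6*(C ζ)^8
            -84*X^4*(C ζ)^12-96*X^3*(C ζ)^14-54*X^2*(C ζ)^16-16*X*(C ζ)^18-2*(C ζ)^20) * hcw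
end

section
/- Let i ∈ k satisfy i² = −1 and let a, b ∈ k with a, b ∉ {2, −2}, a ∉ {0, 6, −6}, and a² ≠ −12 (so that Aut(H_a) ≅ Q₈). There exist u, λ ∈ k with u ≠ 0, λ ≠ 0 and ε ∈ {1, −1} such that λ²·f_b(X) = Σ_{j=0}^{9} cⱼ·(εi)ʲ·(X+u)ʲ·(X−u)^{10−j} in k[X] (where cⱼ is the coefficient of Xʲ in f_a, i.e. λ²·f_b(x) = (x−u)¹⁰·f_a(εi(x+u)/(x−u))), if and only if b = 2 + 16/(a−2) or b = −2 − 16/(a−2). -/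
open Polynomial

lemma key_sum {k : Type*} [Field k] (a t u : k) (ht : t ^ 2 = -1) :
    (∑ j ∈ Finset.range 10,
        C ((f a).coeff j * t ^ j) * (X + C u) ^ j * (X - C u) ^ (10 - j))
    = C (8 * t * u) * (C (2 - a) * X ^ 9 + C ((2 * a + 12) * u ^ 2) * X ^ 7
        - C ((2 * a + 12) * u ^ 6) * X ^ 3 - C ((2 - a) * u ^ 8) * X) := by
  have hfa : f a = X ^ 9 + C a * X ^ 7 - C a * X ^ 3 - X := by unfold f; ring
  have h9 : t ^ 9 = t := by rw [show t ^ 9 = t * (t ^ 2) ^ 4 by ring, ht]; ring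
  have h7 : t ^ 7 = -t := by rw [show t ^ 7 = t * (t ^ 2) ^ 3 by ring, ht]; ring
  have h3 : t ^ 3 = -t := by rw [show t ^ 3 = t * t ^ 2 by ring, ht]; ring
  simp only [Finset.sum_range_succ, Finset.sum_range_zero, hfa, coeff_add, coeff_sub,
    coeff_X, coeff_X_pow, coeff_C_mul]
  norm_num [h9, h7, h3]
  simp only [C_mul, C_neg, map_ofNat, C_1]
  ring

lemma shape_eq {k : Type*} [Field k] (A B D e9 e7 e3 e1 : k)
    (h9 : A = D * e9) (h7 : A * B = D * e7) (h3 : A * B = D * e3) (h1 : A = D * e1) :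
    C A * (X ^ 9 + C B * X ^ 7 - C B * X ^ 3 - X) =
    C D * (C e9 * X ^ 9 + C e7 * X ^ 7 - C e3 * X ^ 3 - C e1 * X) := by
  trans (C (D * e9) * X ^ 9 + C (D * e7) * X ^ 7 - C (D * e3) * X ^ 3 - C (D * e1) * X)
  · rw [← h9, ← h7, ← h3, ← h1]; simp only [C_mul]; ring
  · simp only [C_mul]; ring


theorem stmt_15 (p : ℕ) (hp : p.Prime) (hp7 : 7 ≤ p)
    (k : Type*) [Field k] [IsAlgClosed k] [CharP k p]
    (i : k) (hi : i ^ 2 = -1)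
    (a b : k) (ha2 : a ∉ ({2, -2} : Set k)) (hb2 : b ∉ ({2, -2} : Set k))
    (ha : a ∉ ({0, 6, -6} : Set k)) (ha12 : a ^ 2 ≠ -12) :
    (∃ u lam ε : k, u ≠ 0 ∧ lam ≠ 0 ∧ ε ∈ ({1, -1} : Set k) ∧
      C (lam ^ 2) * f b =
        ∑ j ∈ Finset.range 10,
          C ((f a).coeff j * (ε * i) ^ j) * (X + C u) ^ j * (X - C u) ^ (10 - j)) ↔
    (b = 2 + 16 / (a - 2) ∨ b = -2 - 16 / (a - 2)) := by
  simp only [Set.mem_insert_iff, Set.mem_singleton_iff, not_or] at ha2 ha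
  obtain ⟨haneq2, -⟩ := ha2
  obtain ⟨-, -, hane6⟩ := ha
  have ha2' : a - 2 ≠ 0 := sub_ne_zero.mpr haneq2
  have h2a' : (2 : k) - a ≠ 0 := by
    intro h; apply haneq2; linear_combination -h
  have h2ne : (2 : k) ≠ 0 := by
    intro h
    have h' : ((2 : ℕ) : k) = 0 := by exact_mod_cast h
    have hd := (CharP.cast_eq_zero_iff k p 2).mp h'
    have := Nat.le_of_dvd (by norm_num) hd
    omega
  have h8ne : (8 : k) ≠ 0 := by
    intro h
    have h' : ((8 : ℕ) : k) = 0 := by exact_mod_cast h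
    have hd := (CharP.cast_eq_zero_iff k p 8).mp h'
    have hd2 : p ∣ 2 := hp.dvd_of_dvd_pow (show p ∣ 2 ^ 3 by norm_num at hd ⊢; exact hd)
    have := Nat.le_of_dvd (by norm_num) hd2
    omega
  have hine : i ≠ 0 := by
    intro h
    rw [h] at hi
    norm_num at hi
  have ha6' : 2 * a + 12 ≠ 0 := by
    intro h
    apply hane6
    have h2 : (2 : k) * a = 2 * (-6) := by linear_combination h
    exact mul_left_cancel₀ h2ne h2
  have hfb : f b = X ^ 9 + C b * X ^ 7 - C b * X ^ 3 - X := by unfold f; ring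
  constructor
  · rintro ⟨u, lam, ε, hu, hlam, hε, heq⟩
    simp only [Set.mem_insert_iff, Set.mem_singleton_iff] at hε
    have ht2 : (ε * i) ^ 2 = -1 := by
      rcases hε with h | h <;> simp [h, mul_pow, hi]
    rw [key_sum a (ε * i) u ht2, hfb] at heq
    have htu : 8 * (ε * i) * u ≠ 0 := by
      rcases hε with h | h <;> subst h <;>
        simp [mul_ne_zero, h8ne, hine, hu]
    have hl2 : lam ^ 2 ≠ 0 := pow_ne_zero 2 hlam
    have c9 := congrArg (fun q : k[X] => q.coeff 9) heq
    have c7 := congrArg (fun q : k[X] => q.coeff 7) heq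
    have c3 := congrArg (fun q : k[X] => q.coeff 3) heq
    simp only [coeff_C_mul, coeff_add, coeff_sub, coeff_X, coeff_X_pow] at c9 c7 c3
    norm_num at c9 c7 c3
    -- c9 : lam ^ 2 = 8 * (ε * i) * u * (2 - a)
    -- c7 : lam ^ 2 * b = 8 * (ε * i) * u * ((2 * a + 12) * u ^ 2)
    -- c3 : lam ^ 2 * b = 8 * (ε * i) * u * ((2 * a + 12) * u ^ 6)
    have hu26 : u ^ 2 = u ^ 6 := by
      have h := c7.symm.trans c3
      have h' := mul_left_cancel₀ htu h
      exact mul_left_cancel₀ ha6' h'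
    have hu4 : u ^ 4 = 1 := by
      have : u ^ 2 * (u ^ 4 - 1) = 0 := by linear_combination -hu26
      rcases mul_eq_zero.mp this with h | h
      · exact absurd (pow_eq_zero_iff (by norm_num) |>.mp h) hu
      · linear_combination h
    have hu2 : u ^ 2 = 1 ∨ u ^ 2 = -1 := by
      have : (u ^ 2 - 1) * (u ^ 2 + 1) = 0 := by linear_combination hu4
      rcases mul_eq_zero.mp this with h | h
      · left; linear_combination h
      · right; linear_combination h
    have hkey : b * (2 - a) = (2 * a + 12) * u ^ 2 := by
      have h := c7
      rw [c9] at h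
      -- (8 (εi) u (2-a)) * b = 8 (εi) u ((2a+12) u^2)
      have h' : (8 * (ε * i) * u) * ((2 - a) * b) = (8 * (ε * i) * u) * ((2 * a + 12) * u ^ 2) := by
        linear_combination h
      have := mul_left_cancel₀ htu h'
      linear_combination this
    rcases hu2 with h | h <;> rw [h] at hkey
    · right
      field_simp
      linear_combination -hkey
    · left
      field_simp
      linear_combination -hkey
  · intro hb
    have hi4 : i ^ 4 = 1 := by rw [show i ^ 4 = (i ^ 2) ^ 2 by ring, hi]; ring
    rcases hb with hb | hb
    · -- b = 2 + 16/(a-2), take u = i (u² = -1)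
      have hb' : b * (a - 2) = 2 * a + 12 := by
        rw [hb]; field_simp; ring
      obtain ⟨lam, hlam⟩ := IsAlgClosed.exists_pow_nat_eq (8 * (1 * i) * i * (2 - a)) (n := 2) (by norm_num)
      have hlamne : lam ≠ 0 := by
        have hne : (8 : k) * (1 * i) * i * (2 - a) ≠ 0 :=
          mul_ne_zero (mul_ne_zero (mul_ne_zero h8ne (by simpa using hine)) hine) h2a'
        intro h
        apply hne
        rw [← hlam, h]
        ring
      refine ⟨i, lam, 1, hine, hlamne, Or.inl rfl, ?_⟩
      rw [key_sum a (1 * i) i (by simp [hi]), hfb]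
      refine shape_eq _ _ _ _ _ _ _ hlam ?_ ?_ ?_
      · linear_combination b * hlam - 8 * i ^ 2 * hb' - 8 * i ^ 2 * (2 * a + 12) * hi
      · linear_combination b * hlam - 8 * i ^ 2 * hb' -
          8 * i ^ 2 * (2 * a + 12) * (i ^ 4 - i ^ 2 + 1) * hi
      · linear_combination hlam - 8 * i ^ 2 * (2 - a) * (i ^ 2 - 1) * (i ^ 4 + 1) * hi
    · -- b = -2 - 16/(a-2), take u = 1
      have hb' : b * (a - 2) = -(2 * a + 12) := by
        rw [hb]; field_simp; ring
      obtain ⟨lam, hlam⟩ := IsAlgClosed.exists_pow_nat_eq (8 * (1 * i) * 1 * (2 - a)) (n := 2) (by norm_num)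
      have hlamne : lam ≠ 0 := by
        have hne : (8 : k) * (1 * i) * 1 * (2 - a) ≠ 0 :=
          mul_ne_zero (mul_ne_zero (mul_ne_zero h8ne (by simpa using hine)) one_ne_zero) h2a'
        intro h
        apply hne
        rw [← hlam, h]
        ring
      refine ⟨1, lam, 1, one_ne_zero, hlamne, Or.inl rfl, ?_⟩
      rw [key_sum a (1 * i) 1 (by simp [hi]), hfb]
      refine shape_eq _ _ _ _ _ _ _ hlam ?_ ?_ ?_
      · linear_combination b * hlam - 8 * i * hb'
      · linear_combination b * hlam - 8 * i * hb'
      · linear_combination hlam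
end

section
/- Suppose p ≡ 1 or 5 (mod 8) (equivalently p ≡ 1 (mod 4)). Then the coefficients c_n of f_a^{(p−1)/2} satisfy: c_{p−2} = c_{p−4} = c_{2p−1} = c_{2p−3} = c_{3p−2} = c_{3p−4} = c_{4p−1} = c_{4p−3} = 0, and c_{3p−1} = c_{2p−4}, c_{3p−3} = c_{2p−2}, c_{4p−2} = c_{p−3}, c_{4p−4} = c_{p−1}. In other words, the Cartier–Manin matrix of H_a equals the matrix with rows (c_{p−1}, 0, c_{p−3}, 0), (0, c_{2p−2}, 0, c_{2p−4}), (c_{2p−4}, 0, c_{2p−2}, 0), (0, c_{p−3}, 0, c_{p−1}). -/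
open Polynomial

/-- `c p a n` is the coefficient of `Xⁿ` in `f_a ^ ((p−1)/2)`. -/
noncomputable def c {k : Type*} [Field k] (p : ℕ) (a : k) (n : ℕ) : k :=
  ((f a) ^ ((p - 1) / 2)).coeff n

/-- The Cartier–Manin matrix of `H_a : y² = f_a(x)`, the 4×4 matrix `(c_{ip−j})_{1 ≤ i,j ≤ 4}`. -/
noncomputable def CartierManin {k : Type*} [Field k] (p : ℕ) (a : k) :
    Matrix (Fin 4) (Fin 4) k :=
  Matrix.of fun i j : Fin 4 => c p a ((i.1 + 1) * p - (j.1 + 1))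

/-- `f a` as `X` times an expansion in `X²`. -/
lemma f_eq_expand {k : Type*} [Field k] (a : k) :
    f a = X * (expand k 2 ((X ^ 2 - 1) * (X ^ 2 + C a * X + 1))) := by
  simp only [map_mul, map_sub, map_add, map_pow, map_one, expand_X, expand_C]
  rw [f]
  ring

lemma natDegree_f_le {k : Type*} [Field k] (a : k) : (f a).natDegree ≤ 10 := by
  rw [f]
  compute_degree
  norm_num

lemma reflect_f {k : Type*} [Field k] (a : k) : reflect 10 (f a) = - f a := by
  have hf : f a = C (1 : k) * X ^ 9 + C a * X ^ 7 + C (-a) * X ^ 3 + C (-1 : k) * X ^ 1 := by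
    rw [f]; simp only [map_neg, map_one]; ring
  rw [hf]
  rw [reflect_add, reflect_add, reflect_add, reflect_C_mul_X_pow, reflect_C_mul_X_pow,
    reflect_C_mul_X_pow, reflect_C_mul_X_pow]
  rw [revAt_le (by norm_num), revAt_le (by norm_num), revAt_le (by norm_num),
    revAt_le (by norm_num)]
  norm_num
  ring

lemma reflect_f_pow {k : Type*} [Field k] (a : k) (m : ℕ) :
    reflect (10 * m) ((f a) ^ m) = (- f a) ^ m := by
  induction m with
  | zero => simp
  | succ n ih =>
    have h1 : (f a) ^ (n + 1) = (f a) ^ n * f a := by ring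
    have h2 : 10 * (n + 1) = 10 * n + 10 := by ring
    rw [h1, h2, reflect_mul _ _ (le_trans (natDegree_pow_le)
      (by nlinarith [natDegree_f_le a])) (natDegree_f_le a), ih, reflect_f]
    ring

/-- Vanishing of odd coefficients when `(p-1)/2` is even. -/
lemma c_odd_zero {k : Type*} [Field k] (p : ℕ) (a : k) (n : ℕ)
    (hm : ((p - 1) / 2) % 2 = 0) (hn : n % 2 = 1) : c p a n = 0 := by
  set m := (p - 1) / 2 with hmdef
  have : (f a) ^ m = expand k 2 (((X ^ 2 - 1) * (X ^ 2 + C a * X + 1)) ^ m) * X ^ m := by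
    rw [f_eq_expand, mul_pow, map_pow]; ring
  rw [c, ← hmdef, this, coeff_mul_X_pow']
  split_ifs with h
  · rw [coeff_expand (by norm_num)]
    have : ¬ (2 ∣ (n - m)) := by omega
    simp [this]
  · rfl

/-- Palindromic symmetry of the coefficients when `(p-1)/2` is even. -/
lemma c_symm {k : Type*} [Field k] (p : ℕ) (a : k) (n : ℕ)
    (hm : ((p - 1) / 2) % 2 = 0) (hn : n ≤ 10 * ((p - 1) / 2)) :
    c p a n = c p a (10 * ((p - 1) / 2) - n) := by
  set m := (p - 1) / 2 with hmdef
  have hrefl : reflect (10 * m) ((f a) ^ m) = (f a) ^ m := by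
    rw [reflect_f_pow]
    have : Even m := Nat.even_iff.mpr hm
    exact this.neg_pow _
  have := congrArg (fun g => Polynomial.coeff g (10 * m - n)) hrefl
  simp only [coeff_reflect] at this
  rw [revAt_le (by omega)] at this
  have hnn : 10 * m - (10 * m - n) = n := by omega
  rw [hnn] at this
  rw [c, c, ← hmdef, ← this]

theorem stmt_19 (p : ℕ) (hp : p.Prime) (hp7 : 7 ≤ p)
    (hmod : p % 8 = 1 ∨ p % 8 = 5)
    (k : Type*) [Field k] [CharP k p] (a : k) :
    (c p a (p - 2) = 0 ∧ c p a (p - 4) = 0 ∧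
     c p a (2 * p - 1) = 0 ∧ c p a (2 * p - 3) = 0 ∧
     c p a (3 * p - 2) = 0 ∧ c p a (3 * p - 4) = 0 ∧
     c p a (4 * p - 1) = 0 ∧ c p a (4 * p - 3) = 0 ∧
     c p a (3 * p - 1) = c p a (2 * p - 4) ∧ c p a (3 * p - 3) = c p a (2 * p - 2) ∧
     c p a (4 * p - 2) = c p a (p - 3) ∧ c p a (4 * p - 4) = c p a (p - 1)) ∧
    CartierManin p a =
      !![c p a (p - 1), 0, c p a (p - 3), 0;
         0, c p a (2 * p - 2), 0, c p a (2 * p - 4);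
         c p a (2 * p - 4), 0, c p a (2 * p - 2), 0;
         0, c p a (p - 3), 0, c p a (p - 1)] := by
  have hm : ((p - 1) / 2) % 2 = 0 := by omega
  have symm : ∀ n n' : ℕ, n + n' = 5 * p - 5 → n ≤ 5 * p - 5 → c p a n = c p a n' := by
    intro n n' hnn' hn
    have h10 : 10 * ((p - 1) / 2) = 5 * p - 5 := by omega
    rw [c_symm p a n hm (by omega)]
    congr 1
    omega
  have h1 : c p a (p - 2) = 0 := c_odd_zero p a _ hm (by omega)
  have h2 : c p a (p - 4) = 0 := c_odd_zero p a _ hm (by omega)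
  have h3 : c p a (2 * p - 1) = 0 := c_odd_zero p a _ hm (by omega)
  have h4 : c p a (2 * p - 3) = 0 := c_odd_zero p a _ hm (by omega)
  have h5 : c p a (3 * p - 2) = 0 := c_odd_zero p a _ hm (by omega)
  have h6 : c p a (3 * p - 4) = 0 := c_odd_zero p a _ hm (by omega)
  have h7 : c p a (4 * p - 1) = 0 := c_odd_zero p a _ hm (by omega)
  have h8 : c p a (4 * p - 3) = 0 := c_odd_zero p a _ hm (by omega)
  have h9 : c p a (3 * p - 1) = c p a (2 * p - 4) := symm _ _ (by omega) (by omega)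
  have h10 : c p a (3 * p - 3) = c p a (2 * p - 2) := symm _ _ (by omega) (by omega)
  have h11 : c p a (4 * p - 2) = c p a (p - 3) := symm _ _ (by omega) (by omega)
  have h12 : c p a (4 * p - 4) = c p a (p - 1) := symm _ _ (by omega) (by omega)
  refine ⟨⟨h1, h2, h3, h4, h5, h6, h7, h8, h9, h10, h11, h12⟩, ?_⟩
  ext i j
  fin_cases i <;> fin_cases j <;>
    simp only [CartierManin, Matrix.of_apply, Matrix.cons_val', Matrix.cons_val_zero,
      Matrix.cons_val_one, Matrix.head_cons, Matrix.empty_val', Matrix.cons_val_fin_one,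
      Matrix.head_fin_const, Matrix.cons_val_two, Matrix.tail_cons, Matrix.cons_val_three,
      Matrix.head_fin_const, Fin.isValue] <;>
    norm_num [h1, h2, h3, h4, h5, h6, h7, h8, h9, h10, h11, h12]
end
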